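/- Fix an enumeration a_1, …, a_n of A and suppose Σ_{r∈R} q(r) ≥ n. For a profile P = (≻_a)_{a∈A} of strict total orders on R, let f(P) : A → R denote the assignment produced by the serial priority rule run with the reported preferences P. Then the mechanism f is strategy-proof: for every agent a_k with true strict total order ≻ on R, every profile P in which a_k reports ≻, and every profile P′ that agrees with P on all agents other than a_k, it holds that f(P)(a_k) ⪰ f(P′)(a_k) with respect to the true order ≻. -/
import Mathlib


/-- Resource `r` is available at step `k` if fewer than `q r` of the agents processed
before step `k` have been assigned `r`. -/
def Available {R : Type*} [DecidableEq R] {n : ℕ} (q : R → ℕ) (μ : Fin n → R)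
    (k : Fin n) (r : R) : Prop :=
  (Finset.univ.filter fun j : Fin n => j < k ∧ μ j = r).card < q r

/-- `μ` is produced by the serial priority rule run with the reported profile `P`:
each agent `k` receives an available resource at its step, and that resource is the
`P k`-greatest available one. -/
def IsSerial {R : Type*} [DecidableEq R] {n : ℕ} (P : Fin n → R → R → Prop)
    (q : R → ℕ) (μ : Fin n → R) : Prop :=
  ∀ k : Fin n, Available q μ k (μ k) ∧
    ∀ r : R, Available q μ k r → r ≠ μ k → P k (μ k) r

/-- the serial priority rule is strategy-proof. Fix the enumeration
(agents indexed by `Fin n`) and suppose total capacity is at least `n ≥ 1`. Let agent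
`k`'s true strict total order be `P k` (agent `k` reports truthfully in profile `P`),
and let `P'` be any profile agreeing with `P` on all agents other than `k`. If `μ` and
`μ'` are the assignments produced by the serial priority rule run with `P` and `P'`
respectively, then `k` weakly prefers `μ k` to `μ' k` under its true order `P k`. -/
theorem serial_rule_strategy_proof
    {R : Type*} [Fintype R] [DecidableEq R] {n : ℕ} (hn : 1 ≤ n)
    (q : R → ℕ) (hq : n ≤ ∑ r : R, q r)
    (P P' : Fin n → R → R → Prop)
    (hP : ∀ a : Fin n, IsStrictTotalOrder R (P a))
    (hP' : ∀ a : Fin n, IsStrictTotalOrder R (P' a))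
    (k : Fin n) (hagree : ∀ a : Fin n, a ≠ k → P' a = P a)
    (μ μ' : Fin n → R)
    (hμ : IsSerial P q μ) (hμ' : IsSerial P' q μ') :
    μ' k = μ k ∨ P k (μ k) (μ' k) := by
  -- agents before k get the same assignment under both profiles
  have key : ∀ j : Fin n, j < k → μ j = μ' j := by
    have main : ∀ m : ℕ, ∀ j : Fin n, (j : ℕ) < m → j < k → μ j = μ' j := by
      intro m
      induction m with
      | zero => intro j hj; omega
      | succ m ih =>
        intro j hjm hjk
        have hagreej : ∀ i : Fin n, i < j → μ i = μ' i := fun i hij =>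
          ih i (by have := Fin.lt_iff_val_lt_val.mp hij; omega) (hij.trans hjk)
        have havail : ∀ r : R, Available q μ j r ↔ Available q μ' j r := by
          intro r
          unfold Available
          have : (Finset.univ.filter fun i : Fin n => i < j ∧ μ i = r)
              = (Finset.univ.filter fun i : Fin n => i < j ∧ μ' i = r) := by
            apply Finset.filter_congr
            intro i _
            constructor
            · rintro ⟨hi, he⟩; exact ⟨hi, (hagreej i hi) ▸ he⟩
            · rintro ⟨hi, he⟩; exact ⟨hi, (hagreej i hi) ▸ he⟩
          rw [this]
        have hPj : P' j = P j := hagree j (ne_of_lt hjk)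
        by_contra hne
        have h1 : P j (μ j) (μ' j) :=
          (hμ j).2 (μ' j) ((havail (μ' j)).mpr (hμ' j).1) (fun h => hne h.symm)
        have h2 : P j (μ' j) (μ j) := by
          have := (hμ' j).2 (μ j) ((havail (μ j)).mp (hμ j).1) hne
          rwa [hPj] at this
        exact (hP j).irrefl (μ j) ((hP j).trans _ _ _ h1 h2)
    exact fun j => main n j j.isLt
  -- availability at step k is the same
  have havail : ∀ r : R, Available q μ k r ↔ Available q μ' k r := by
    intro r
    unfold Available
    have : (Finset.univ.filter fun i : Fin n => i < k ∧ μ i = r)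
        = (Finset.univ.filter fun i : Fin n => i < k ∧ μ' i = r) := by
      apply Finset.filter_congr
      intro i _
      constructor
      · rintro ⟨hi, he⟩; exact ⟨hi, (key i hi) ▸ he⟩
      · rintro ⟨hi, he⟩; exact ⟨hi, (key i hi) ▸ he⟩
    rw [this]
  by_cases h : μ' k = μ k
  · exact Or.inl h
  · exact Or.inr ((hμ k).2 (μ' k) ((havail (μ' k)).mpr (hμ' k).1) h)
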